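/- Let A be a unital associative algebra over ℂ such that A = Im(A), let X be a ℂ-vector space, and let φ : A × A → X be a ℂ-bilinear map such that φ(a,b) = 0 whenever a, b ∈ A satisfy ab = ba = 0. Then φ(a,b) + φ(b,a) = φ(ab, 1) + φ(1, ba) and φ(a,1) = φ(1,a) for all a, b ∈ A. -/
import Mathlib

private lemma key_idem
    {A X : Type*} [Ring A] [Algebra ℂ A] [AddCommGroup X] [Module ℂ X]
    (φ : A →ₗ[ℂ] A →ₗ[ℂ] X)
    (h : ∀ a b : A, a * b = 0 → b * a = 0 → φ a b = 0)
    (p : A) (hp : p * p = p) (b : A) :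
    φ p b + φ b p = φ (p * b) 1 + φ 1 (b * p) := by
  obtain ⟨f, hf⟩ : ∃ f : A, f = 1 - p := ⟨_, rfl⟩
  have hpf : p * f = 0 := by rw [hf, mul_sub, mul_one, hp, sub_self]
  have hfp : f * p = 0 := by rw [hf, sub_mul, one_mul, hp, sub_self]
  have hff : f * f = f := by rw [hf]; noncomm_ring [hp]
  obtain ⟨b11, hb11⟩ : ∃ c : A, c = p * b * p := ⟨_, rfl⟩
  obtain ⟨b12, hb12⟩ : ∃ c : A, c = p * b * f := ⟨_, rfl⟩
  obtain ⟨b21, hb21⟩ : ∃ c : A, c = f * b * p := ⟨_, rfl⟩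
  obtain ⟨b22, hb22⟩ : ∃ c : A, c = f * b * f := ⟨_, rfl⟩
  have z1 : p * b22 = 0 := by
    rw [show p * b22 = (p * f) * (b * f) by rw [hb22]; noncomm_ring, hpf, zero_mul]
  have z2 : b22 * p = 0 := by
    rw [show b22 * p = (f * b) * (f * p) by rw [hb22]; noncomm_ring, hfp, mul_zero]
  have z3 : b11 * f = 0 := by
    rw [show b11 * f = (p * b) * (p * f) by rw [hb11]; noncomm_ring, hpf, mul_zero]
  have z4 : f * b11 = 0 := by
    rw [show f * b11 = (f * p) * (b * p) by rw [hb11]; noncomm_ring, hfp, zero_mul]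
  have pb12 : p * b12 = b12 := by
    rw [show p * b12 = (p * p) * (b * f) by rw [hb12]; noncomm_ring, hp, hb12, mul_assoc]
  have b12f : b12 * f = b12 := by
    rw [show b12 * f = p * b * (f * f) by rw [hb12]; noncomm_ring, hff, hb12]
  have b12sq : b12 * b12 = 0 := by
    rw [show b12 * b12 = (p * b) * (f * p) * (b * f) by rw [hb12]; noncomm_ring, hfp,
      mul_zero, zero_mul]
  have fb12 : f * b12 = 0 := by
    rw [show f * b12 = (f * p) * (b * f) by rw [hb12]; noncomm_ring, hfp, zero_mul]
  have b12p : b12 * p = 0 := by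
    rw [show b12 * p = p * b * (f * p) by rw [hb12]; noncomm_ring, hfp, mul_zero]
  have fb21 : f * b21 = b21 := by
    rw [show f * b21 = (f * f) * (b * p) by rw [hb21]; noncomm_ring, hff, hb21, mul_assoc]
  have b21p : b21 * p = b21 := by
    rw [show b21 * p = f * b * (p * p) by rw [hb21]; noncomm_ring, hp, hb21]
  have b21sq : b21 * b21 = 0 := by
    rw [show b21 * b21 = (f * b) * (p * f) * (b * p) by rw [hb21]; noncomm_ring, hpf,
      mul_zero, zero_mul]
  have pb21 : p * b21 = 0 := by
    rw [show p * b21 = (p * f) * (b * p) by rw [hb21]; noncomm_ring, hpf, zero_mul]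
  have b21f : b21 * f = 0 := by
    rw [show b21 * f = f * b * (p * f) by rw [hb21]; noncomm_ring, hpf, mul_zero]
  -- φ facts
  have A1 : φ p f = 0 := h p f hpf hfp
  have A2 : φ f p = 0 := h f p hfp hpf
  have C : φ p b22 = 0 := h p b22 z1 z2
  have D : φ b22 p = 0 := h b22 p z2 z1
  have E : φ b11 f = 0 := h b11 f z3 z4
  have F : φ f b11 = 0 := h f b11 z4 z3
  have G : φ (p + b12) (f - b12) = 0 := by
    apply h
    · rw [add_mul, mul_sub, mul_sub, hpf, pb12, b12f, b12sq]; abel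
    · rw [sub_mul, mul_add, mul_add, hfp, fb12, b12p, b12sq]; abel
  have H : φ (f - b21) (p + b21) = 0 := by
    apply h
    · rw [sub_mul, mul_add, mul_add, hfp, fb21, b21p, b21sq]; abel
    · rw [add_mul, mul_sub, mul_sub, hpf, pb21, b21f, b21sq]; abel
  have Bq : φ b12 b12 = 0 := h b12 b12 b12sq b12sq
  have Bq' : φ b21 b21 = 0 := h b21 b21 b21sq b21sq
  simp only [map_add, map_sub, LinearMap.add_apply, LinearMap.sub_apply, A1, Bq,
    zero_sub, zero_add, sub_zero, add_zero] at G
  simp only [map_add, map_sub, LinearMap.add_apply, LinearMap.sub_apply, A2, Bq',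
    zero_sub, zero_add, sub_zero, add_zero] at H
  -- decompositions
  have hdb : b = b11 + b12 + b21 + b22 := by
    rw [hb11, hb12, hb21, hb22, hf]; noncomm_ring
  have hpb : p * b = b11 + b12 := by rw [hb11, hb12, hf]; noncomm_ring [hp]
  have hbp : b * p = b11 + b21 := by rw [hb11, hb21, hf]; noncomm_ring [hp]
  have honef : (1 : A) = f + p := by rw [hf]; abel
  have e1 : φ b12 f = φ b12 1 - φ b12 p := by rw [honef, map_add]; abel
  have e2 : φ f b21 = φ 1 b21 - φ p b21 := by rw [honef, map_add, LinearMap.add_apply]; abel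
  have e3 : φ b11 1 = φ b11 p := by rw [honef, map_add, E, zero_add]
  have e4 : φ 1 b11 = φ p b11 := by rw [honef, map_add, LinearMap.add_apply, F, zero_add]
  have G' : φ p b12 = φ b12 1 - φ b12 p := by
    rw [← e1]; exact (sub_eq_zero.mp G).symm
  have H' : φ b21 p = φ 1 b21 - φ p b21 := by
    rw [← e2]; exact neg_add_eq_zero.mp H
  rw [hpb, hbp, hdb]
  simp only [map_add, LinearMap.add_apply, C, D, add_zero]
  rw [e3, e4, G', H']
  abel

/-- Theorem 3.5 (second part): if a unital complex algebra is spanned by its idempotents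
and the bilinear map `φ` satisfies condition (G), then
`φ(a,b) + φ(b,a) = φ(ab,1) + φ(1,ba)` and `φ(a,1) = φ(1,a)` for all `a, b ∈ A`. -/
theorem bilinear_condition_G_of_span_idempotents
    {A X : Type*} [Ring A] [Algebra ℂ A] [AddCommGroup X] [Module ℂ X]
    (hA : Submodule.span ℂ {p : A | p * p = p} = ⊤)
    (φ : A →ₗ[ℂ] A →ₗ[ℂ] X)
    (h : ∀ a b : A, a * b = 0 → b * a = 0 → φ a b = 0) :
    ∀ a b : A, (φ a b + φ b a = φ (a * b) 1 + φ 1 (b * a)) ∧ φ a 1 = φ 1 a := by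
  have main : ∀ a b : A, φ a b + φ b a = φ (a * b) 1 + φ 1 (b * a) := by
    intro a
    have ha : a ∈ Submodule.span ℂ {p : A | p * p = p} := by rw [hA]; trivial
    induction ha using Submodule.span_induction with
    | mem p hp => exact key_idem φ h p hp
    | zero => intro b; simp
    | add x y hx hy ihx ihy =>
      intro b
      have := ihx b
      have := ihy b
      simp only [add_mul, mul_add, map_add, LinearMap.add_apply] at *
      rw [show φ x b + φ y b + (φ b x + φ b y)
          = (φ x b + φ b x) + (φ y b + φ b y) by abel, ihx b, ihy b]
      abel
    | smul c x hx ihx =>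
      intro b
      simp only [smul_mul_assoc, mul_smul_comm, map_smul, LinearMap.smul_apply]
      rw [← smul_add, ihx b, smul_add]
  have second : ∀ a : A, φ a 1 = φ 1 a := by
    intro a
    have ha : a ∈ Submodule.span ℂ {p : A | p * p = p} := by rw [hA]; trivial
    induction ha using Submodule.span_induction with
    | mem p hp =>
      have hpf : p * (1 - p) = 0 := by rw [mul_sub, mul_one, hp, sub_self]
      have hfp : (1 - p) * p = 0 := by rw [sub_mul, one_mul, hp, sub_self]
      have h1 : φ p (1 - p) = 0 := h p (1 - p) hpf hfp
      have h2 : φ (1 - p) p = 0 := h (1 - p) p hfp hpf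
      rw [map_sub, sub_eq_zero] at h1
      rw [map_sub, LinearMap.sub_apply, sub_eq_zero] at h2
      rw [h1, ← h2]
    | zero => simp
    | add x y hx hy ihx ihy => simp only [map_add, LinearMap.add_apply, ihx, ihy]
    | smul c x hx ihx => simp only [map_smul, LinearMap.smul_apply, ihx]
  exact fun a b => ⟨main a b, second a⟩
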